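/- arXiv:1907.06174 — 2 statements merged into one kernel-verified Lean document; each statement's English description precedes it below -/
import Mathlib

section
/- Let A > B > 0, μ ∈ ℝ be real parameters. Define, for (M,q) ∈ ℝ³ × ℝ³, the functions H(M,q) = ½|M|² − μ|q|/√(R(q)) and F(M,q) = A M₁² + B M₂² + (2√(AB)/|q|)(M·q) M₃ − 2μ√(AB) q₃/√(R(q)), where R(q) = A q₂² + B q₁² + (A+B) q₃² − 2√(AB)|q| q₃. Then at every point (M,q) with R(q) > 0 the Lie–Poisson bracket of H and F vanishes: {H,F}(M,q) = 0. -/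
open scoped Matrix

infixl:74 " ×₃ " => crossProduct

/-- Gradient with respect to the `M` variables of a function on `ℝ³ × ℝ³`. -/
noncomputable def gradM (f : (Fin 3 → ℝ) × (Fin 3 → ℝ) → ℝ)
    (x : (Fin 3 → ℝ) × (Fin 3 → ℝ)) : Fin 3 → ℝ :=
  fun i => fderiv ℝ f x (Pi.single i 1, 0)

/-- Gradient with respect to the `q` variables of a function on `ℝ³ × ℝ³`. -/
noncomputable def gradQ (f : (Fin 3 → ℝ) × (Fin 3 → ℝ) → ℝ)
    (x : (Fin 3 → ℝ) × (Fin 3 → ℝ)) : Fin 3 → ℝ :=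
  fun i => fderiv ℝ f x (0, Pi.single i 1)

/-- The Lie–Poisson bracket of `e(3)*`:
`{f,g}(M,q) = M·(∇_M f × ∇_M g) + q·(∇_M f × ∇_q g + ∇_q f × ∇_M g)`. -/
noncomputable def liePoissonE3 (f g : (Fin 3 → ℝ) × (Fin 3 → ℝ) → ℝ)
    (x : (Fin 3 → ℝ) × (Fin 3 → ℝ)) : ℝ :=
  x.1 ⬝ᵥ (gradM f x ×₃ gradM g x) +
    x.2 ⬝ᵥ (gradM f x ×₃ gradQ g x + gradQ f x ×₃ gradM g x)

/-- Euclidean norm `|q|` of `q ∈ ℝ³`. -/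
noncomputable def qnorm (q : Fin 3 → ℝ) : ℝ :=
  Real.sqrt (q 0 ^ 2 + q 1 ^ 2 + q 2 ^ 2)

/-- `R(q) = A q₂² + B q₁² + (A+B) q₃² − 2√(AB)|q| q₃` (here `q i` is `q_{i+1}`). -/
noncomputable def Rfun (A B : ℝ) (q : Fin 3 → ℝ) : ℝ :=
  A * q 1 ^ 2 + B * q 0 ^ 2 + (A + B) * q 2 ^ 2 -
    2 * Real.sqrt (A * B) * qnorm q * q 2

/-- The Hamiltonian `H = ½|M|² − μ|q|/√R(q)`. -/
noncomputable def Hfun (A B μ : ℝ) (x : (Fin 3 → ℝ) × (Fin 3 → ℝ)) : ℝ :=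
  (1 / 2) * (x.1 0 ^ 2 + x.1 1 ^ 2 + x.1 2 ^ 2) -
    μ * qnorm x.2 / Real.sqrt (Rfun A B x.2)

/-- The integral `F = A M₁² + B M₂² + (2√(AB)/|q|)(M·q)M₃ − 2μ√(AB) q₃/√R(q)`. -/
noncomputable def Ffun (A B μ : ℝ) (x : (Fin 3 → ℝ) × (Fin 3 → ℝ)) : ℝ :=
  A * x.1 0 ^ 2 + B * x.1 1 ^ 2 +
    (2 * Real.sqrt (A * B) / qnorm x.2) * (x.1 ⬝ᵥ x.2) * x.1 2 -
    2 * μ * Real.sqrt (A * B) * x.2 2 / Real.sqrt (Rfun A B x.2)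


private lemma hasFDerivAt_fstApply (i : Fin 3) (x : (Fin 3 → ℝ) × (Fin 3 → ℝ)) :
    HasFDerivAt (fun y : (Fin 3 → ℝ) × (Fin 3 → ℝ) => y.1 i)
      ((ContinuousLinearMap.proj i).comp (ContinuousLinearMap.fst ℝ (Fin 3 → ℝ) (Fin 3 → ℝ))) x :=
  ((ContinuousLinearMap.proj i).comp (ContinuousLinearMap.fst ℝ (Fin 3 → ℝ) (Fin 3 → ℝ))).hasFDerivAt

private lemma hasFDerivAt_sndApply (i : Fin 3) (x : (Fin 3 → ℝ) × (Fin 3 → ℝ)) :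
    HasFDerivAt (fun y : (Fin 3 → ℝ) × (Fin 3 → ℝ) => y.2 i)
      ((ContinuousLinearMap.proj i).comp (ContinuousLinearMap.snd ℝ (Fin 3 → ℝ) (Fin 3 → ℝ))) x :=
  ((ContinuousLinearMap.proj i).comp (ContinuousLinearMap.snd ℝ (Fin 3 → ℝ) (Fin 3 → ℝ))).hasFDerivAt

set_option maxHeartbeats 2000000 in
/-- For `A > B > 0` the Lie–Poisson bracket of `H` and `F` vanishes at every
point where `R(q) > 0`. -/
theorem liePoisson_H_F_eq_zero (A B μ : ℝ) (hAB : A > B) (hB : B > 0)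
    (x : (Fin 3 → ℝ) × (Fin 3 → ℝ)) (hR : Rfun A B x.2 > 0) :
    liePoissonE3 (Hfun A B μ) (Ffun A B μ) x = 0 := by
  obtain ⟨M, q⟩ := x
  have hA : 0 < A := lt_trans hB hAB
  have hR' : 0 < Rfun A B q := hR
  have hQpos : 0 < q 0 ^ 2 + q 1 ^ 2 + q 2 ^ 2 := by
    rcases lt_or_ge 0 (q 0 ^ 2 + q 1 ^ 2 + q 2 ^ 2) with h | h
    · exact h
    · exfalso
      have h0 : q 0 = 0 := by nlinarith [sq_nonneg (q 0), sq_nonneg (q 1), sq_nonneg (q 2)]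
      have h1 : q 1 = 0 := by nlinarith [sq_nonneg (q 0), sq_nonneg (q 1), sq_nonneg (q 2)]
      have h2 : q 2 = 0 := by nlinarith [sq_nonneg (q 0), sq_nonneg (q 1), sq_nonneg (q 2)]
      have : Rfun A B q = 0 := by simp [Rfun, qnorm, h0, h1, h2]
      rw [this] at hR'
      exact lt_irrefl 0 hR'
  have hNpos : 0 < Real.sqrt (q 0 ^ 2 + q 1 ^ 2 + q 2 ^ 2) := Real.sqrt_pos.mpr hQpos
  have hRexp : Rfun A B q = A * q 1 ^ 2 + B * q 0 ^ 2 + (A + B) * q 2 ^ 2 - 2 * Real.sqrt (A * B) * Real.sqrt (q 0 ^ 2 + q 1 ^ 2 + q 2 ^ 2) * q 2 := by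
    simp [Rfun, qnorm]
  have hR2 : 0 < A * q 1 ^ 2 + B * q 0 ^ 2 + (A + B) * q 2 ^ 2 - 2 * Real.sqrt (A * B) * Real.sqrt (q 0 ^ 2 + q 1 ^ 2 + q 2 ^ 2) * q 2 := hRexp ▸ hR'
  have hSpos : 0 < Real.sqrt (A * q 1 ^ 2 + B * q 0 ^ 2 + (A + B) * q 2 ^ 2 - 2 * Real.sqrt (A * B) * Real.sqrt (q 0 ^ 2 + q 1 ^ 2 + q 2 ^ 2) * q 2) := Real.sqrt_pos.mpr hR2
  -- basic derivative pieces
  have hm0 := hasFDerivAt_fstApply 0 (M, q)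
  have hm1 := hasFDerivAt_fstApply 1 (M, q)
  have hm2 := hasFDerivAt_fstApply 2 (M, q)
  have hq0 := hasFDerivAt_sndApply 0 (M, q)
  have hq1 := hasFDerivAt_sndApply 1 (M, q)
  have hq2 := hasFDerivAt_sndApply 2 (M, q)
  have hm0s := (hasDerivAt_pow 2 (M 0)).comp_hasFDerivAt ((M, q) : (Fin 3 → ℝ) × (Fin 3 → ℝ)) hm0
  have hm1s := (hasDerivAt_pow 2 (M 1)).comp_hasFDerivAt ((M, q) : (Fin 3 → ℝ) × (Fin 3 → ℝ)) hm1
  have hm2s := (hasDerivAt_pow 2 (M 2)).comp_hasFDerivAt ((M, q) : (Fin 3 → ℝ) × (Fin 3 → ℝ)) hm2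
  have hq0s := (hasDerivAt_pow 2 (q 0)).comp_hasFDerivAt ((M, q) : (Fin 3 → ℝ) × (Fin 3 → ℝ)) hq0
  have hq1s := (hasDerivAt_pow 2 (q 1)).comp_hasFDerivAt ((M, q) : (Fin 3 → ℝ) × (Fin 3 → ℝ)) hq1
  have hq2s := (hasDerivAt_pow 2 (q 2)).comp_hasFDerivAt ((M, q) : (Fin 3 → ℝ) × (Fin 3 → ℝ)) hq2
  have hQd := (hq0s.add hq1s).add hq2s
  have hNd := hQd.sqrt (ne_of_gt hQpos)
  have hNinv := (hasDerivAt_inv (ne_of_gt hNpos)).comp_hasFDerivAt ((M, q) : (Fin 3 → ℝ) × (Fin 3 → ℝ)) hNd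
  have hRd := (((hq1s.const_mul A).add (hq0s.const_mul B)).add (hq2s.const_mul (A + B))).sub
      ((hNd.const_mul (2 * Real.sqrt (A * B))).mul hq2)
  have hSd := hRd.sqrt (ne_of_gt hR2)
  have hSinv := (hasDerivAt_inv (ne_of_gt hSpos)).comp_hasFDerivAt ((M, q) : (Fin 3 → ℝ) × (Fin 3 → ℝ)) hSd
  -- derivative of H
  have HfunEq : Hfun A B μ = (fun y : (Fin 3 → ℝ) × (Fin 3 → ℝ) => 1 / 2 * (y.1 0 ^ 2 + y.1 1 ^ 2 + y.1 2 ^ 2) - μ * (Real.sqrt (y.2 0 ^ 2 + y.2 1 ^ 2 + y.2 2 ^ 2) * (Real.sqrt (A * y.2 1 ^ 2 + B * y.2 0 ^ 2 + (A + B) * y.2 2 ^ 2 - 2 * Real.sqrt (A * B) * Real.sqrt (y.2 0 ^ 2 + y.2 1 ^ 2 + y.2 2 ^ 2) * y.2 2))⁻¹)) := by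
    funext y
    simp only [Hfun, qnorm, Rfun]
    ring
  obtain ⟨LH, hLH, hLHv⟩ : ∃ L : (Fin 3 → ℝ) × (Fin 3 → ℝ) →L[ℝ] ℝ,
      HasFDerivAt (Hfun A B μ) L (M, q) ∧ ∀ v : (Fin 3 → ℝ) × (Fin 3 → ℝ),
        L v = M 0 * v.1 0 + M 1 * v.1 1 + M 2 * v.1 2 +
          ((-(μ) * (q 0 / (Real.sqrt (q 0 ^ 2 + q 1 ^ 2 + q 2 ^ 2) * Real.sqrt (A * q 1 ^ 2 + B * q 0 ^ 2 + (A + B) * q 2 ^ 2 - 2 * Real.sqrt (A * B) * Real.sqrt (q 0 ^ 2 + q 1 ^ 2 + q 2 ^ 2) * q 2)) - Real.sqrt (q 0 ^ 2 + q 1 ^ 2 + q 2 ^ 2) * (2 * B * q 0 - 2 * Real.sqrt (A * B) * q 0 * q 2 / Real.sqrt (q 0 ^ 2 + q 1 ^ 2 + q 2 ^ 2)) / (2 * Real.sqrt (A * q 1 ^ 2 + B * q 0 ^ 2 + (A + B) * q 2 ^ 2 - 2 * Real.sqrt (A * B) * Real.sqrt (q 0 ^ 2 + q 1 ^ 2 +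 q 2 ^ 2) * q 2) ^ 3))) * v.2 0 + (-(μ) * (q 1 / (Real.sqrt (q 0 ^ 2 + q 1 ^ 2 + q 2 ^ 2) * Real.sqrt (A * q 1 ^ 2 + B * q 0 ^ 2 + (A + B) * q 2 ^ 2 - 2 * Real.sqrt (A * B) * Real.sqrt (q 0 ^ 2 + q 1 ^ 2 + q 2 ^ 2) * q 2)) - Real.sqrt (q 0 ^ 2 + q 1 ^ 2 + q 2 ^ 2) * (2 * A * q 1 - 2 * Real.sqrt (A * B) * q 1 * q 2 / Real.sqrt (q 0 ^ 2 + q 1 ^ 2 + q 2 ^ 2)) / (2 * Real.sqrt (A * q 1 ^ 2 + B * q 0 ^ 2 + (A + B) * q 2 ^ 2 - 2 * Real.sqrt (A * B) * Real.sqrt (q 0 ^ 2 + q 1 ^ 2 + q 2 ^ 2) * q 2) ^ 3))) * v.2 1 + (-(μ) * (q 2 / (Real.sqrt (q 0 ^ 2 + q 1 ^ 2 + q 2 ^ 2) * Real.sqrt (A * q 1 ^ 2 + B * q 0 ^ 2 + (A + B) * q 2 ^ 2 - 2 * Real.sqrt (A * B) * Real.sqrt (q 0 ^ 2 + q 1 ^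 2 + q 2 ^ 2) * q 2)) - Real.sqrt (q 0 ^ 2 + q 1 ^ 2 + q 2 ^ 2) * (2 * (A + B) * q 2 - 2 * Real.sqrt (A * B) * q 2 ^ 2 / Real.sqrt (q 0 ^ 2 + q 1 ^ 2 + q 2 ^ 2) - 2 * Real.sqrt (A * B) * Real.sqrt (q 0 ^ 2 + q 1 ^ 2 + q 2 ^ 2)) / (2 * Real.sqrt (A * q 1 ^ 2 + B * q 0 ^ 2 + (A + B) * q 2 ^ 2 - 2 * Real.sqrt (A * B) * Real.sqrt (q 0 ^ 2 + q 1 ^ 2 + q 2 ^ 2) * q 2) ^ 3))) * v.2 2) := by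
    have hHd := ((((hm0s.add hm1s).add hm2s).const_mul (1 / 2 : ℝ)).sub ((hNd.mul hSinv).const_mul μ))
    refine ⟨_, by rw [HfunEq]; exact hHd, fun v => ?_⟩
    simp only [ContinuousLinearMap.sub_apply, ContinuousLinearMap.add_apply,
      ContinuousLinearMap.smul_apply, ContinuousLinearMap.coe_comp', Function.comp_apply,
      ContinuousLinearMap.coe_fst', ContinuousLinearMap.coe_snd',
      ContinuousLinearMap.proj_apply, smul_eq_mul]
    simp only [Pi.add_apply, Pi.sub_apply, Pi.mul_apply, Function.comp_apply]
    all_goals ring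
  -- derivative of F
  have FfunEq : Ffun A B μ = (fun y : (Fin 3 → ℝ) × (Fin 3 → ℝ) => A * y.1 0 ^ 2 + B * y.1 1 ^ 2 + 2 * Real.sqrt (A * B) * ((y.1 0 * y.2 0 + y.1 1 * y.2 1 + y.1 2 * y.2 2) * y.1 2 * (Real.sqrt (y.2 0 ^ 2 + y.2 1 ^ 2 + y.2 2 ^ 2))⁻¹) - 2 * μ * Real.sqrt (A * B) * (y.2 2 * (Real.sqrt (A * y.2 1 ^ 2 + B * y.2 0 ^ 2 + (A + B) * y.2 2 ^ 2 - 2 * Real.sqrt (A * B) * Real.sqrt (y.2 0 ^ 2 + y.2 1 ^ 2 + y.2 2 ^ 2) * y.2 2))⁻¹)) := by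
    funext y
    simp only [Ffun, qnorm, Rfun, dotProduct, Fin.sum_univ_three]
    ring
  obtain ⟨LF, hLF, hLFv⟩ : ∃ L : (Fin 3 → ℝ) × (Fin 3 → ℝ) →L[ℝ] ℝ,
      HasFDerivAt (Ffun A B μ) L (M, q) ∧ ∀ v : (Fin 3 → ℝ) × (Fin 3 → ℝ),
        L v = (2 * A * M 0 + 2 * Real.sqrt (A * B) * q 0 * M 2 / Real.sqrt (q 0 ^ 2 + q 1 ^ 2 + q 2 ^ 2)) * v.1 0 + (2 * B * M 1 + 2 * Real.sqrt (A * B) * q 1 * M 2 / Real.sqrt (q 0 ^ 2 + q 1 ^ 2 + q 2 ^ 2)) * v.1 1 + (2 * Real.sqrt (A * B) * (M 0 * q 0 + M 1 * q 1 + M 2 * q 2) / Real.sqrt (q 0 ^ 2 + q 1 ^ 2 + q 2 ^ 2) + 2 * Real.sqrt (A * B) * q 2 * M 2 / Real.sqrt (q 0 ^ 2 + q 1 ^ 2 + q 2 ^ 2)) * v.1 2 +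
          ((2 * Real.sqrt (A * B) * M 2 * (M 0 / Real.sqrt (q 0 ^ 2 + q 1 ^ 2 + q 2 ^ 2) - (M 0 * q 0 + M 1 * q 1 + M 2 * q 2) * q 0 / Real.sqrt (q 0 ^ 2 + q 1 ^ 2 + q 2 ^ 2) ^ 3) - 2 * μ * Real.sqrt (A * B) * ((0:ℝ) / Real.sqrt (A * q 1 ^ 2 + B * q 0 ^ 2 + (A + B) * q 2 ^ 2 - 2 * Real.sqrt (A * B) * Real.sqrt (q 0 ^ 2 + q 1 ^ 2 + q 2 ^ 2) * q 2) - q 2 * (2 * B * q 0 - 2 * Real.sqrt (A * B) * q 0 * q 2 / Real.sqrt (q 0 ^ 2 + q 1 ^ 2 + q 2 ^ 2)) / (2 * Real.sqrt (A * q 1 ^ 2 + B * q 0 ^ 2 + (A + B) * q 2 ^ 2 - 2 * Real.sqrt (A * B) * Real.sqrt (q 0 ^ 2 + q 1 ^ 2 + q 2 ^ 2) * q 2) ^ 3))) * v.2 0 + (2 * Real.sqrt (A * B) * M 2 * (M 1 / Real.sqrt (q 0 ^ 2 + q 1 ^ 2 + q 2 ^ 2) - (M 0 * q 0 + M 1 *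 q 1 + M 2 * q 2) * q 1 / Real.sqrt (q 0 ^ 2 + q 1 ^ 2 + q 2 ^ 2) ^ 3) - 2 * μ * Real.sqrt (A * B) * ((0:ℝ) / Real.sqrt (A * q 1 ^ 2 + B * q 0 ^ 2 + (A + B) * q 2 ^ 2 - 2 * Real.sqrt (A * B) * Real.sqrt (q 0 ^ 2 + q 1 ^ 2 + q 2 ^ 2) * q 2) - q 2 * (2 * A * q 1 - 2 * Real.sqrt (A * B) * q 1 * q 2 / Real.sqrt (q 0 ^ 2 + q 1 ^ 2 + q 2 ^ 2)) / (2 * Real.sqrt (A * q 1 ^ 2 + B * q 0 ^ 2 + (A + B) * q 2 ^ 2 - 2 * Real.sqrt (A * B) * Real.sqrt (q 0 ^ 2 + q 1 ^ 2 + q 2 ^ 2) * q 2) ^ 3))) * v.2 1 + (2 * Real.sqrt (A * B) * M 2 * (M 2 / Real.sqrt (q 0 ^ 2 + q 1 ^ 2 + q 2 ^ 2) - (M 0 * q 0 + M 1 * q 1 + M 2 * q 2) * q 2 / Real.sqrt (q 0 ^ 2 + q 1 ^ 2 + q 2 ^ 2) ^ 3) - 2 * μ * Real.sqrt (A * B)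 * (1 / Real.sqrt (A * q 1 ^ 2 + B * q 0 ^ 2 + (A + B) * q 2 ^ 2 - 2 * Real.sqrt (A * B) * Real.sqrt (q 0 ^ 2 + q 1 ^ 2 + q 2 ^ 2) * q 2) - q 2 * (2 * (A + B) * q 2 - 2 * Real.sqrt (A * B) * q 2 ^ 2 / Real.sqrt (q 0 ^ 2 + q 1 ^ 2 + q 2 ^ 2) - 2 * Real.sqrt (A * B) * Real.sqrt (q 0 ^ 2 + q 1 ^ 2 + q 2 ^ 2)) / (2 * Real.sqrt (A * q 1 ^ 2 + B * q 0 ^ 2 + (A + B) * q 2 ^ 2 - 2 * Real.sqrt (A * B) * Real.sqrt (q 0 ^ 2 + q 1 ^ 2 + q 2 ^ 2) * q 2) ^ 3))) * v.2 2) := by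
    have hFd := (((hm0s.const_mul A).add (hm1s.const_mul B)).add
          (((((hm0.mul hq0).add (hm1.mul hq1)).add (hm2.mul hq2)).mul hm2).mul hNinv |>.const_mul
            (2 * Real.sqrt (A * B)))).sub
        ((hq2.mul hSinv).const_mul (2 * μ * Real.sqrt (A * B)))
    refine ⟨_, by rw [FfunEq]; exact hFd, fun v => ?_⟩
    simp only [ContinuousLinearMap.sub_apply, ContinuousLinearMap.add_apply,
      ContinuousLinearMap.smul_apply, ContinuousLinearMap.coe_comp', Function.comp_apply,
      ContinuousLinearMap.coe_fst', ContinuousLinearMap.coe_snd',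
      ContinuousLinearMap.proj_apply, smul_eq_mul]
    simp only [Pi.add_apply, Pi.sub_apply, Pi.mul_apply, Function.comp_apply]
    all_goals ring
  -- gradients
  have gMH : gradM (Hfun A B μ) (M, q) = ![M 0, M 1, M 2] := by
    funext i
    simp only [gradM, hLH.fderiv, hLHv]
    fin_cases i <;>
      simp [Pi.single_apply, Fin.ext_iff]
  have gQH : gradQ (Hfun A B μ) (M, q) = ![(-(μ) * (q 0 / (Real.sqrt (q 0 ^ 2 + q 1 ^ 2 + q 2 ^ 2) * Real.sqrt (A * q 1 ^ 2 + B * q 0 ^ 2 + (A + B) * q 2 ^ 2 - 2 * Real.sqrt (A * B) * Real.sqrt (q 0 ^ 2 + q 1 ^ 2 + q 2 ^ 2) * q 2)) - Real.sqrt (q 0 ^ 2 + q 1 ^ 2 + q 2 ^ 2) * (2 * B * q 0 - 2 * Real.sqrt (A * B) * q 0 * q 2 / Real.sqrt (q 0 ^ 2 + q 1 ^ 2 + q 2 ^ 2)) / (2 * Real.sqrt (A * q 1 ^ 2 + B * q 0 ^ 2 + (A + B) * q 2 ^ 2 - 2 * Real.sqrt (A * B) * Real.sqrt (q 0 ^ 2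 + q 1 ^ 2 + q 2 ^ 2) * q 2) ^ 3))), (-(μ) * (q 1 / (Real.sqrt (q 0 ^ 2 + q 1 ^ 2 + q 2 ^ 2) * Real.sqrt (A * q 1 ^ 2 + B * q 0 ^ 2 + (A + B) * q 2 ^ 2 - 2 * Real.sqrt (A * B) * Real.sqrt (q 0 ^ 2 + q 1 ^ 2 + q 2 ^ 2) * q 2)) - Real.sqrt (q 0 ^ 2 + q 1 ^ 2 + q 2 ^ 2) * (2 * A * q 1 - 2 * Real.sqrt (A * B) * q 1 * q 2 / Real.sqrt (q 0 ^ 2 + q 1 ^ 2 + q 2 ^ 2)) / (2 * Real.sqrt (A * q 1 ^ 2 + B * q 0 ^ 2 + (A + B) * q 2 ^ 2 - 2 * Real.sqrt (A * B) * Real.sqrt (q 0 ^ 2 + q 1 ^ 2 + q 2 ^ 2) * q 2) ^ 3))), (-(μ) * (q 2 / (Real.sqrt (q 0 ^ 2 + q 1 ^ 2 + q 2 ^ 2) * Real.sqrt (A * q 1 ^ 2 + B * q 0 ^ 2 + (A + B) * q 2 ^ 2 - 2 * Real.sqrt (A * B) * Real.sqrt (q 0 ^ 2 + q 1 ^ 2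 + q 2 ^ 2) * q 2)) - Real.sqrt (q 0 ^ 2 + q 1 ^ 2 + q 2 ^ 2) * (2 * (A + B) * q 2 - 2 * Real.sqrt (A * B) * q 2 ^ 2 / Real.sqrt (q 0 ^ 2 + q 1 ^ 2 + q 2 ^ 2) - 2 * Real.sqrt (A * B) * Real.sqrt (q 0 ^ 2 + q 1 ^ 2 + q 2 ^ 2)) / (2 * Real.sqrt (A * q 1 ^ 2 + B * q 0 ^ 2 + (A + B) * q 2 ^ 2 - 2 * Real.sqrt (A * B) * Real.sqrt (q 0 ^ 2 + q 1 ^ 2 + q 2 ^ 2) * q 2) ^ 3)))] := by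
    funext i
    simp only [gradQ, hLH.fderiv, hLHv]
    fin_cases i <;>
      simp [Pi.single_apply, Fin.ext_iff]
  have gMF : gradM (Ffun A B μ) (M, q) = ![(2 * A * M 0 + 2 * Real.sqrt (A * B) * q 0 * M 2 / Real.sqrt (q 0 ^ 2 + q 1 ^ 2 + q 2 ^ 2)), (2 * B * M 1 + 2 * Real.sqrt (A * B) * q 1 * M 2 / Real.sqrt (q 0 ^ 2 + q 1 ^ 2 + q 2 ^ 2)), (2 * Real.sqrt (A * B) * (M 0 * q 0 + M 1 * q 1 + M 2 * q 2) / Real.sqrt (q 0 ^ 2 + q 1 ^ 2 + q 2 ^ 2) + 2 * Real.sqrt (A * B) * q 2 * M 2 / Real.sqrt (q 0 ^ 2 + q 1 ^ 2 + q 2 ^ 2))] := by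
    funext i
    simp only [gradM, hLF.fderiv, hLFv]
    fin_cases i <;>
      simp [Pi.single_apply, Fin.ext_iff]
  have gQF : gradQ (Ffun A B μ) (M, q) = ![(2 * Real.sqrt (A * B) * M 2 * (M 0 / Real.sqrt (q 0 ^ 2 + q 1 ^ 2 + q 2 ^ 2) - (M 0 * q 0 + M 1 * q 1 + M 2 * q 2) * q 0 / Real.sqrt (q 0 ^ 2 + q 1 ^ 2 + q 2 ^ 2) ^ 3) - 2 * μ * Real.sqrt (A * B) * ((0:ℝ) / Real.sqrt (A * q 1 ^ 2 + B * q 0 ^ 2 + (A + B) * q 2 ^ 2 - 2 * Real.sqrt (A * B) * Real.sqrt (q 0 ^ 2 + q 1 ^ 2 + q 2 ^ 2) * q 2) - q 2 * (2 * B * q 0 - 2 * Real.sqrt (A * B) * q 0 * q 2 / Real.sqrt (q 0 ^ 2 + q 1 ^ 2 + q 2 ^ 2)) / (2 * Real.sqrt (A * q 1 ^ 2 + B * q 0 ^ 2 + (A + B) * q 2 ^ 2 - 2 * Real.sqrt (A * B) * Real.sqrt (q 0 ^ 2 + q 1 ^ 2 + q 2 ^ 2) * q 2) ^ 3))), (2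 * Real.sqrt (A * B) * M 2 * (M 1 / Real.sqrt (q 0 ^ 2 + q 1 ^ 2 + q 2 ^ 2) - (M 0 * q 0 + M 1 * q 1 + M 2 * q 2) * q 1 / Real.sqrt (q 0 ^ 2 + q 1 ^ 2 + q 2 ^ 2) ^ 3) - 2 * μ * Real.sqrt (A * B) * ((0:ℝ) / Real.sqrt (A * q 1 ^ 2 + B * q 0 ^ 2 + (A + B) * q 2 ^ 2 - 2 * Real.sqrt (A * B) * Real.sqrt (q 0 ^ 2 + q 1 ^ 2 + q 2 ^ 2) * q 2) - q 2 * (2 * A * q 1 - 2 * Real.sqrt (A * B) * q 1 * q 2 / Real.sqrt (q 0 ^ 2 + q 1 ^ 2 + q 2 ^ 2)) / (2 * Real.sqrt (A * q 1 ^ 2 + B * q 0 ^ 2 + (A + B) * q 2 ^ 2 - 2 * Real.sqrt (A * B) * Real.sqrt (q 0 ^ 2 + q 1 ^ 2 + q 2 ^ 2) * q 2) ^ 3))), (2 * Real.sqrt (A * B) * M 2 * (M 2 / Real.sqrt (q 0 ^ 2 + q 1 ^ 2 + q 2 ^ 2) - (M 0 * q 0 + M 1 * q 1 + M 2 * q 2)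 * q 2 / Real.sqrt (q 0 ^ 2 + q 1 ^ 2 + q 2 ^ 2) ^ 3) - 2 * μ * Real.sqrt (A * B) * (1 / Real.sqrt (A * q 1 ^ 2 + B * q 0 ^ 2 + (A + B) * q 2 ^ 2 - 2 * Real.sqrt (A * B) * Real.sqrt (q 0 ^ 2 + q 1 ^ 2 + q 2 ^ 2) * q 2) - q 2 * (2 * (A + B) * q 2 - 2 * Real.sqrt (A * B) * q 2 ^ 2 / Real.sqrt (q 0 ^ 2 + q 1 ^ 2 + q 2 ^ 2) - 2 * Real.sqrt (A * B) * Real.sqrt (q 0 ^ 2 + q 1 ^ 2 + q 2 ^ 2)) / (2 * Real.sqrt (A * q 1 ^ 2 + B * q 0 ^ 2 + (A + B) * q 2 ^ 2 - 2 * Real.sqrt (A * B) * Real.sqrt (q 0 ^ 2 + q 1 ^ 2 + q 2 ^ 2) * q 2) ^ 3)))] := by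
    funext i
    simp only [gradQ, hLF.fderiv, hLFv]
    fin_cases i <;>
      simp [Pi.single_apply, Fin.ext_iff]
  -- final algebraic identity
  simp only [liePoissonE3, gMH, gQH, gMF, gQF, cross_apply, dotProduct,
    Fin.sum_univ_three, Pi.add_apply, Matrix.cons_val_zero, Matrix.cons_val_one,
    Matrix.head_cons, Matrix.cons_val_two, Matrix.tail_cons]
  set nn := Real.sqrt (q 0 ^ 2 + q 1 ^ 2 + q 2 ^ 2) with hnn_def
  set cc := Real.sqrt (A * B) with hcc_def
  set ss := Real.sqrt (A * q 1 ^ 2 + B * q 0 ^ 2 + (A + B) * q 2 ^ 2 - 2 * cc * nn * q 2) with hss_def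
  have hn2 : nn ^ 2 = q 0 ^ 2 + q 1 ^ 2 + q 2 ^ 2 := Real.sq_sqrt hQpos.le
  have hs2 : ss ^ 2 = A * q 1 ^ 2 + B * q 0 ^ 2 + (A + B) * q 2 ^ 2 - 2 * cc * nn * q 2 :=
    Real.sq_sqrt hR2.le
  have hc2 : cc ^ 2 = A * B := Real.sq_sqrt (by positivity)
  have hnne : nn ≠ 0 := ne_of_gt hNpos
  have hsne : ss ≠ 0 := ne_of_gt hSpos
  field_simp
  linear_combination ((-2) * μ * cc * nn ^ 3 * M 1 * q 0 + (2) * μ * cc * nn ^ 3 * M 0 * q 1) * hs2 +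
      ((2) * μ * cc ^ 2 * M 1 * q 0 * q 2 ^ 3 + (2) * μ * cc ^ 2 * M 1 * q 0 * q 1 ^ 2 * q 2 + (2) * μ * cc ^ 2 * M 1 * q 0 ^ 3 * q 2 + (-2) * μ * cc ^ 2 * M 0 * q 1 * q 2 ^ 3 + (-2) * μ * cc ^ 2 * M 0 * q 1 ^ 3 * q 2 + (-2) * μ * cc ^ 2 * M 0 * q 0 ^ 2 * q 1 * q 2 + (2) * μ * cc ^ 2 * nn ^ 2 * M 1 * q 0 * q 2 + (-2) * μ * cc ^ 2 * nn ^ 2 * M 0 * q 1 * q 2 + (2) * B * μ * cc * nn ^ 3 * M 1 * q 0 + (-2) * A * μ * cc * nn ^ 3 * M 0 * q 1 + (-2) * A * B * μ * M 1 * q 0 * q 2 ^ 3 + (-2) * A * B * μ * M 1 * q 0 * q 1 ^ 2 * q 2 + (-2) * A * B * μ * M 1 * q 0 ^ 3 * q 2 + (2) * A * B * μ * M 0 * q 1 * q 2 ^ 3 + (2) * A * B * μ * M 0 * q 1 ^ 3 * q 2 + (2) * A * B * μ * M 0 * q 0 ^ 2 * q 1 * q 2 + (-2) * A * B * μ * nn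 ^ 2 * M 1 * q 0 * q 2 + (2) * A * B * μ * nn ^ 2 * M 0 * q 1 * q 2) * hn2 +
      ((2) * μ * M 1 * q 0 * q 2 ^ 5 + (4) * μ * M 1 * q 0 * q 1 ^ 2 * q 2 ^ 3 + (2) * μ * M 1 * q 0 * q 1 ^ 4 * q 2 + (4) * μ * M 1 * q 0 ^ 3 * q 2 ^ 3 + (4) * μ * M 1 * q 0 ^ 3 * q 1 ^ 2 * q 2 + (2) * μ * M 1 * q 0 ^ 5 * q 2 + (-2) * μ * M 0 * q 1 * q 2 ^ 5 + (-4) * μ * M 0 * q 1 ^ 3 * q 2 ^ 3 + (-2) * μ * M 0 * q 1 ^ 5 * q 2 + (-4) * μ * M 0 * q 0 ^ 2 * q 1 * q 2 ^ 3 + (-4) * μ * M 0 * q 0 ^ 2 * q 1 ^ 3 * q 2 + (-2) * μ * M 0 * q 0 ^ 4 * q 1 * q 2) * hc2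
end

section
/- Let A > B > 0, let q ∈ ℝ³ satisfy q₁² + q₂² + q₃² = 1 and q₃ ≥ 0, and let u₁, u₂ ≥ 0 satisfy u₁ + u₂ = B q₁² + A q₂² + (A+B) q₃² and u₁ u₂ = A B q₃². Then R(q) = (√u₁ − √u₂)², where R(q) = A q₂² + B q₁² + (A+B) q₃² − 2√(AB) q₃. In particular, for u₁ < u₂, the potential U(q) = −μ/√(R(q)) equals −μ/(√u₂ − √u₁). -/
/-- For `A > B > 0`, a point `q` on the unit sphere with `q₃ ≥ 0`, and
nonnegative `u₁, u₂` with `u₁ + u₂ = Bq₁² + Aq₂² + (A+B)q₃²` and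
`u₁u₂ = ABq₃²` (the spherical elliptic coordinates of `q`), one has
`R(q) = (√u₁ − √u₂)²` for `R(q) = Aq₂² + Bq₁² + (A+B)q₃² − 2√(AB)q₃`;
in particular, for `u₁ < u₂` the potential `U = −μ/√(R(q))` equals
`−μ/(√u₂ − √u₁)`. -/
theorem R_in_elliptic_coordinates (A B μ : ℝ) (hAB : A > B) (hB : B > 0)
    (q : Fin 3 → ℝ) (hq : q 0 ^ 2 + q 1 ^ 2 + q 2 ^ 2 = 1) (hq3 : q 2 ≥ 0)
    (u₁ u₂ : ℝ) (hu₁ : 0 ≤ u₁) (hu₂ : 0 ≤ u₂)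
    (hsum : u₁ + u₂ = B * q 0 ^ 2 + A * q 1 ^ 2 + (A + B) * q 2 ^ 2)
    (hprod : u₁ * u₂ = A * B * q 2 ^ 2) :
    A * q 1 ^ 2 + B * q 0 ^ 2 + (A + B) * q 2 ^ 2 -
        2 * Real.sqrt (A * B) * q 2
      = (Real.sqrt u₁ - Real.sqrt u₂) ^ 2 ∧
    (u₁ < u₂ →
      -μ / Real.sqrt (A * q 1 ^ 2 + B * q 0 ^ 2 + (A + B) * q 2 ^ 2 -
            2 * Real.sqrt (A * B) * q 2)
        = -μ / (Real.sqrt u₂ - Real.sqrt u₁)) := by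
  have hAB0 : 0 ≤ A * B := mul_nonneg (le_of_lt (hB.trans hAB)) hB.le
  have hkey : Real.sqrt u₁ * Real.sqrt u₂ = Real.sqrt (A * B) * q 2 := by
    rw [← Real.sqrt_mul hu₁, hprod, Real.sqrt_mul hAB0, Real.sqrt_sq hq3]
  have hsq : Real.sqrt u₁ ^ 2 = u₁ := Real.sq_sqrt hu₁
  have hsq2 : Real.sqrt u₂ ^ 2 = u₂ := Real.sq_sqrt hu₂
  have hmain : A * q 1 ^ 2 + B * q 0 ^ 2 + (A + B) * q 2 ^ 2 -
      2 * Real.sqrt (A * B) * q 2 = (Real.sqrt u₁ - Real.sqrt u₂) ^ 2 := by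
    have : (Real.sqrt u₁ - Real.sqrt u₂) ^ 2
        = u₁ + u₂ - 2 * (Real.sqrt u₁ * Real.sqrt u₂) := by rw [sub_sq, hsq, hsq2]; ring
    rw [this, hkey, hsum]; ring
  refine ⟨hmain, fun hlt => ?_⟩
  rw [hmain, Real.sqrt_sq_eq_abs, abs_sub_comm,
    abs_of_nonneg (sub_nonneg.2 (Real.sqrt_le_sqrt hlt.le))]
end
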